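/- arXiv:1905.04499 — 3 statements merged into one kernel-verified Lean document; each statement's English description precedes it below -/
import Mathlib

section
/- The formal power series f(t) = Σ_{n≥0} (−1)ⁿ · binom(2n,n)/(4ⁿ(2n+1)) · t^{2n+1} (the arcsinh series) is a compositional inverse of sinh(t) = Σ_{k≥0} t^{2k+1}/(2k+1)! in ℚ[[t]]: sinh(f(t)) = t and f(sinh(t)) = t. -/
open PowerSeries

/-- Composition `f ∘ g` of formal power series (valid when `g` has zero
constant term): the `n`-th coefficient only involves `gᵏ` for `k ≤ n`. -/
noncomputable def psComp (f g : ℚ⟦X⟧) : ℚ⟦X⟧ :=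
  PowerSeries.mk fun n =>
    PowerSeries.coeff n (∑ k ∈ Finset.range (n + 1), PowerSeries.C (PowerSeries.coeff k f) * g ^ k)

/-- `sinh(u) = Σ_{k≥0} u^{2k+1}/(2k+1)!` as a formal power series. -/
noncomputable def psSinh : ℚ⟦X⟧ :=
  PowerSeries.mk fun m => if Odd m then 1 / (m.factorial : ℚ) else 0

/-- The arcsinh series `f(t) = Σ_{n≥0} (−1)ⁿ binom(2n,n)/(4ⁿ(2n+1)) t^{2n+1}`. -/
noncomputable def psArcsinh : ℚ⟦X⟧ :=
  PowerSeries.mk fun m =>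
    if Odd m then
      ((-1 : ℚ) ^ ((m - 1) / 2)) * ((2 * ((m - 1) / 2)).choose ((m - 1) / 2) : ℚ) /
        ((4 : ℚ) ^ ((m - 1) / 2) * (m : ℚ))
    else 0

/-!
The coefficients `aₙ` of arcsinh satisfy `(n + 2)(n + 1) aₙ₊₂ = -n² aₙ` (from
`binom(2k+2, k+1) = 2(2k+1)/(k+1) · binom(2k, k)`), i.e. `f = arcsinh` solves
`(1 + t²) f'' = -t f'`. Substituting `sinh` and using `cosh² = 1 + sinh²`, the series
`u = cosh · (f' ∘ sinh)` has `u' = sinh · (f' ∘ sinh) + cosh² · (f'' ∘ sinh) = 0` and `u(0) = 1`,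
so `(f ∘ sinh)' = u = 1` and `f ∘ sinh = t`. Since `sinh` has invertible linear coefficient,
it has a two-sided compositional inverse, which must then be `f`; hence also `sinh ∘ f = t`.
-/

namespace PowerSeries

variable {R : Type*} [CommRing R]

theorem coeff_pow_eq_zero_of_lt {g : R⟦X⟧} (hg : constantCoeff g = 0) {n k : ℕ} (h : n < k) :
    coeff n (g ^ k) = 0 :=
  X_pow_dvd_iff.mp (pow_dvd_pow_of_dvd (X_dvd_iff.mpr hg) k) n h

theorem coeff_subst_eq_sum_range {f g : R⟦X⟧} (hg : constantCoeff g = 0) (n : ℕ) :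
    coeff n (f.subst g) = ∑ k ∈ Finset.range (n + 1), coeff k f * coeff n (g ^ k) := by
  rw [coeff_subst' (HasSubst.of_constantCoeff_zero' hg)]
  refine finsum_eq_sum_of_support_subset _ fun k hk => ?_
  by_contra h
  simp only [Finset.coe_range, Set.mem_Iio, not_lt] at h
  exact hk (by simp [coeff_pow_eq_zero_of_lt hg (show n < k by omega)])

theorem constantCoeff_subst_of_constantCoeff_eq_zero {f g : R⟦X⟧} (hg : constantCoeff g = 0) :
    constantCoeff (f.subst g) = constantCoeff f := by
  simpa using coeff_subst_eq_sum_range (f := f) hg 0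

theorem subst_eq_X_of_subst_eq_X {P Q : R⟦X⟧} (hP : constantCoeff P = 0)
    (hP₁ : IsUnit (coeff 1 P)) (h : Q.subst P = X) : P.subst Q = X := by
  set P' := P.substInvOfIsUnit hP₁
  have hP' : HasSubst P' := HasSubst.substInvOfIsUnit P hP₁
  have hQ : Q = P' := by
    rw [← X_subst Q, ← subst_substInvOfIsUnit_right P hP hP₁,
      ← subst_comp_subst_apply (HasSubst.of_constantCoeff_zero' hP) hP', h, subst_X hP']
  rw [hQ, subst_substInvOfIsUnit_right P hP hP₁]

theorem one_add_X_sq_mul_derivative_derivative {f : R⟦X⟧}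
    (h : ∀ n : ℕ, ((n : R) + 2) * ((n : R) + 1) * coeff (n + 2) f = -(n : R) ^ 2 * coeff n f) :
    (1 + X ^ 2) * d⁄dX R (d⁄dX R f) = -(X * d⁄dX R f) := by
  ext n
  rw [add_mul, one_mul, map_add, map_neg, coeff_X_pow_mul', coeff_derivative, coeff_derivative]
  rcases n with _ | _ | m
  · rw [coeff_zero_X_mul, if_neg (by omega)]
    linear_combination h 0
  · rw [coeff_succ_X_mul, coeff_derivative, if_neg (by omega), coeff_derivative]
    linear_combination h 1
  · rw [coeff_succ_X_mul, coeff_derivative, if_pos (by omega), coeff_derivative,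
      coeff_derivative]
    have hm := h (m + 2)
    push_cast at hm ⊢
    linear_combination hm

end PowerSeries

theorem psComp_eq_subst {f g : ℚ⟦X⟧} (hg : constantCoeff g = 0) : psComp f g = f.subst g := by
  ext n
  simp [psComp, coeff_subst_eq_sum_range hg, map_sum, coeff_C_mul]

noncomputable def psCosh : ℚ⟦X⟧ :=
  PowerSeries.mk fun m => if Even m then 1 / (m.factorial : ℚ) else 0

theorem derivative_mk_ite_one_div_factorial (p : ℕ → Prop) [DecidablePred p] :
    d⁄dX ℚ (mk fun m => if p m then 1 / (m.factorial : ℚ) else 0) =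
      mk fun m => if p (m + 1) then 1 / (m.factorial : ℚ) else 0 := by
  ext m
  rw [coeff_derivative, coeff_mk, coeff_mk]
  split_ifs
  · rw [Nat.factorial_succ]
    push_cast
    field_simp
  · rw [zero_mul]

theorem derivative_psSinh : d⁄dX ℚ psSinh = psCosh := by
  rw [psSinh, derivative_mk_ite_one_div_factorial, psCosh]
  simp only [Nat.odd_add_one, Nat.not_odd_iff_even]

theorem derivative_psCosh : d⁄dX ℚ psCosh = psSinh := by
  rw [psCosh, derivative_mk_ite_one_div_factorial, psSinh]
  simp only [Nat.even_add_one, Nat.not_even_iff_odd]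

theorem constantCoeff_psSinh : constantCoeff psSinh = 0 := by
  simp [psSinh, ← coeff_zero_eq_constantCoeff_apply]

theorem coeff_one_psSinh : coeff 1 psSinh = 1 := by
  simp [psSinh]

theorem constantCoeff_psCosh : constantCoeff psCosh = 1 := by
  simp [psCosh, ← coeff_zero_eq_constantCoeff_apply]

theorem psCosh_sq : psCosh ^ 2 = 1 + psSinh ^ 2 := by
  refine derivative.ext ?_ ?_
  · simp only [map_add, Derivation.leibniz_pow, derivative_psSinh, derivative_psCosh,
      Derivation.map_one_eq_zero]
    ring
  · simp [constantCoeff_psSinh, constantCoeff_psCosh]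

theorem constantCoeff_psArcsinh : constantCoeff psArcsinh = 0 := by
  simp [psArcsinh, ← coeff_zero_eq_constantCoeff_apply]

theorem constantCoeff_derivative_psArcsinh : constantCoeff (d⁄dX ℚ psArcsinh) = 1 := by
  simp [psArcsinh, ← coeff_zero_eq_constantCoeff_apply, coeff_derivative]

theorem coeff_psArcsinh_add_two (n : ℕ) :
    ((n : ℚ) + 2) * ((n : ℚ) + 1) * coeff (n + 2) psArcsinh = -(n : ℚ) ^ 2 * coeff n psArcsinh := by
  obtain ⟨k, rfl | rfl⟩ := Nat.even_or_odd' n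
  · have h1 : ¬Odd (2 * k) := by simp
    have h2 : ¬Odd (2 * k + 2) := by rw [Nat.not_odd_iff_even]; exact ⟨k + 1, by ring⟩
    simp only [psArcsinh, coeff_mk, if_neg h1, if_neg h2, mul_zero]
  · have h1 : Odd (2 * k + 1 + 2) := ⟨k + 1, by ring⟩
    have e1 : (2 * k + 1 + 2 - 1) / 2 = k + 1 := by omega
    have e2 : (2 * k + 1 - 1) / 2 = k := by omega
    simp only [psArcsinh, coeff_mk, if_pos h1, if_pos (odd_two_mul_add_one k), e1, e2,
      ← Nat.centralBinom_eq_two_mul_choose]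
    have hc : ((k : ℚ) + 1) * (k + 1).centralBinom = 2 * (2 * k + 1) * k.centralBinom := by
      exact_mod_cast Nat.succ_mul_centralBinom_succ k
    rw [pow_succ, pow_succ]
    push_cast
    field_simp
    linear_combination (-2) * hc

theorem psArcsinh_subst_psSinh : psArcsinh.subst psSinh = X := by
  have hS : HasSubst psSinh := HasSubst.of_constantCoeff_zero' constantCoeff_psSinh
  have hode := congrArg (substAlgHom (R := ℚ) hS)
    (one_add_X_sq_mul_derivative_derivative coeff_psArcsinh_add_two)
  simp only [map_mul, map_add, map_one, map_pow, map_neg, substAlgHom_X, coe_substAlgHom] at hode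
  rw [← psCosh_sq] at hode
  have hu : psCosh * (d⁄dX ℚ psArcsinh).subst psSinh = 1 := by
    refine derivative.ext ?_ ?_
    · rw [Derivation.leibniz, derivative_subst hS, derivative_psCosh, derivative_psSinh,
        Derivation.map_one_eq_zero, smul_eq_mul, smul_eq_mul]
      linear_combination hode
    · rw [map_mul, constantCoeff_psCosh, constantCoeff_subst_of_constantCoeff_eq_zero
        constantCoeff_psSinh, constantCoeff_derivative_psArcsinh, map_one, one_mul]
  refine derivative.ext ?_ ?_
  · rw [derivative_subst hS, derivative_psSinh, mul_comm, hu, derivative_X]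
  · rw [constantCoeff_subst_of_constantCoeff_eq_zero constantCoeff_psSinh,
      constantCoeff_psArcsinh, constantCoeff_X]

/-- The arcsinh series is a compositional inverse of the sinh series in `ℚ⟦X⟧`:
`sinh(f(t)) = t` and `f(sinh(t)) = t`. -/
theorem stmt2 :
    psComp psSinh psArcsinh = PowerSeries.X ∧ psComp psArcsinh psSinh = PowerSeries.X := by
  rw [psComp_eq_subst constantCoeff_psArcsinh, psComp_eq_subst constantCoeff_psSinh]
  exact ⟨subst_eq_X_of_subst_eq_X constantCoeff_psSinh (coeff_one_psSinh ▸ isUnit_one)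
    psArcsinh_subst_psSinh, psArcsinh_subst_psSinh⟩
end

section
/- Let y = Σ_{n≥0} aₙ xⁿ ∈ ℚ[[x]] be the unique formal power series solution of (1−x²)y'' = x y' + y with a₀ = a₁ = 1 (equivalently y = exp(arcsin x)). Then for every n ≥ 0, n!·aₙ = ∏_{k : 1 ≤ k, 2k < n} (1 + (n−2k)²). -/
/-!
Comparing coefficients of `xⁿ` in `(1 - x²) y'' = x y' + y` gives
`(n + 2)(n + 1) aₙ₊₂ = (n² + 1) aₙ`, i.e. `bₙ = n! aₙ` satisfies `bₙ₊₂ = (n² + 1) bₙ`.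
The product `∏_{1 ≤ k, 2k < n} (1 + (n - 2k)²)` obeys the same recursion: its `k = 1` factor for
`n + 2` is `1 + n²`, and the remaining factors are those for `n` shifted by `k ↦ k + 1`.
Both sides equal `1` for `n = 0, 1`.
-/

open PowerSeries Finset

namespace PowerSeries

variable {R : Type*} [CommRing R]

theorem coeff_X_mul_derivative (f : R⟦X⟧) (n : ℕ) :
    coeff n (X * d⁄dX R f) = n * coeff n f := by
  cases n with
  | zero => simp
  | succ n => rw [coeff_succ_X_mul, coeff_derivative, mul_comm]; push_cast; rfl

theorem coeff_X_sq_mul_derivative_derivative (f : R⟦X⟧) (n : ℕ) :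
    coeff n (X ^ 2 * d⁄dX R (d⁄dX R f)) = n * (n - 1) * coeff n f := by
  rcases n with _ | _ | n
  · simp
  · simp [coeff_X_pow_mul']
  · rw [show n + 1 + 1 = n + 2 from rfl, coeff_X_pow_mul, coeff_derivative, coeff_derivative]
    push_cast
    ring

theorem coeff_add_two_of_arcsin_ode {y : R⟦X⟧}
    (hode : (1 - X ^ 2) * d⁄dX R (d⁄dX R y) = X * d⁄dX R y + y) (n : ℕ) :
    ((n : R) + 2) * (n + 1) * coeff (n + 2) y = (n ^ 2 + 1) * coeff n y := by
  have h := congrArg (coeff n) hode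
  simp only [sub_mul, one_mul, map_sub, map_add, coeff_X_sq_mul_derivative_derivative,
    coeff_X_mul_derivative, coeff_derivative] at h
  push_cast at h
  linear_combination h

theorem factorial_mul_coeff_add_two_of_arcsin_ode {y : R⟦X⟧}
    (hode : (1 - X ^ 2) * d⁄dX R (d⁄dX R y) = X * d⁄dX R y + y) (n : ℕ) :
    ((n + 2).factorial : R) * coeff (n + 2) y = ((n : R) ^ 2 + 1) * (n.factorial * coeff n y) := by
  rw [Nat.factorial_succ, Nat.factorial_succ]
  push_cast
  linear_combination (n.factorial : R) * coeff_add_two_of_arcsin_ode hode n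

end PowerSeries

section BettiProduct

variable {R : Type*} [CommRing R]

theorem prod_filter_two_mul_lt_eq_prod_range (n : ℕ) :
    ∏ k ∈ (range n).filter (fun k => 1 ≤ k ∧ 2 * k < n), (1 + ((n : R) - 2 * k) ^ 2)
      = ∏ k ∈ range (n / 2), (1 + ((n : R) - 2 * (k + 1)) ^ 2) := by
  have hsub : (range n).filter (fun k => 1 ≤ k ∧ 2 * k < n) ⊆ (range (n / 2)).image (· + 1) := by
    intro k hk
    simp only [mem_filter, mem_range, mem_image] at hk ⊢
    exact ⟨k - 1, by omega, by omega⟩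
  -- The only extra index is `k = n / 2` for even `n`, whose factor is `1 + 0²`.
  calc _ = ∏ k ∈ (range (n / 2)).image (· + 1), (1 + ((n : R) - 2 * (k : ℕ)) ^ 2) := by
        refine prod_subset hsub fun k hk hk' => ?_
        obtain ⟨j, hj, rfl⟩ := mem_image.1 hk
        have hn : n = 2 * (j + 1) := by
          simp only [mem_filter, mem_range, not_and, not_lt] at hj hk'
          omega
        subst hn
        push_cast
        ring
    _ = _ := by
        rw [prod_image fun a _ b _ h => add_left_injective 1 h]
        push_cast
        rfl

theorem prod_filter_two_mul_lt_add_two (n : ℕ) :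
    ∏ k ∈ (range (n + 2)).filter (fun k => 1 ≤ k ∧ 2 * k < n + 2),
        (1 + (((n + 2 : ℕ) : R) - 2 * k) ^ 2)
      = ((n : R) ^ 2 + 1) * ∏ k ∈ (range n).filter (fun k => 1 ≤ k ∧ 2 * k < n),
        (1 + ((n : R) - 2 * k) ^ 2) := by
  rw [prod_filter_two_mul_lt_eq_prod_range, prod_filter_two_mul_lt_eq_prod_range,
    Nat.add_div_right n two_pos, prod_range_succ']
  push_cast
  ring

end BettiProduct

/-- Let `y = Σ aₙ xⁿ ∈ ℚ[[x]]` satisfy `(1−x²)y'' = x y' + y` with `a₀ = a₁ = 1`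
(i.e. `y = exp(arcsin x)`). Then `n!·aₙ = ∏_{k : 1 ≤ k, 2k < n} (1 + (n−2k)²)`. -/
theorem stmt5 (y : ℚ⟦X⟧)
    (h0 : PowerSeries.coeff 0 y = 1)
    (h1 : PowerSeries.coeff 1 y = 1)
    (hode : (1 - PowerSeries.X ^ 2) * PowerSeries.derivativeFun (PowerSeries.derivativeFun y)
        = PowerSeries.X * PowerSeries.derivativeFun y + y) :
    ∀ n : ℕ, (n.factorial : ℚ) * PowerSeries.coeff n y
      = ∏ k ∈ (Finset.range n).filter (fun k => 1 ≤ k ∧ 2 * k < n),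
          (1 + ((n : ℚ) - 2 * k) ^ 2) := by
  have hode' : (1 - X ^ 2) * d⁄dX ℚ (d⁄dX ℚ y) = X * d⁄dX ℚ y + y := hode
  intro n
  induction n using Nat.twoStepInduction with
  | zero => simp [h0]
  | one => simp [h1, filter_singleton]
  | more n ih _ =>
    rw [factorial_mul_coeff_add_two_of_arcsin_ode hode' n, ih, prod_filter_two_mul_lt_add_two]
end

section
/- In the Drinfeld–Kohno Lie algebra 𝔱(n), with ν_{abc} := [t_{ab}, t_{bc}], for any five pairwise distinct indices i,j,k,p,q one has [ν_{ijk}, ν_{pqi} + ν_{pqj} + ν_{pqk}] = 0. -/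
lemma lie_lie_zero {L : Type*} [LieRing L] {x y z : L}
    (h1 : ⁅x, z⁆ = 0) (h2 : ⁅y, z⁆ = 0) : ⁅⁅x, y⁆, z⁆ = 0 := by
  rw [lie_lie, h1, h2, lie_zero, lie_zero, sub_zero]

/-- `ν_{abc} := [t_{ab}, t_{bc}]`. -/
def nuDK {L : Type*} [LieRing L] (t : ℕ → ℕ → L) (a b c : ℕ) : L := ⁅t a b, t b c⁆

/-- In the Drinfeld–Kohno Lie algebra 𝔱(n) (formalized here as any Lie algebra over ℚ
with symmetric generators `t i j` satisfying the infinitesimal braid relations),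
for five pairwise distinct indices, `[ν_{ijk}, ν_{pqi} + ν_{pqj} + ν_{pqk}] = 0`. -/
theorem stmt16 {L : Type*} [LieRing L] [LieAlgebra ℚ L]
    (n : ℕ) (t : ℕ → ℕ → L)
    (hsymm : ∀ i j, t i j = t j i)
    (hrel1 : ∀ i j k, i < n → j < n → k < n → i ≠ j → i ≠ k → j ≠ k →
      ⁅t i j, t i k + t j k⁆ = 0)
    (hrel2 : ∀ i j k l, i < n → j < n → k < n → l < n →
      i ≠ j → i ≠ k → i ≠ l → j ≠ k → j ≠ l → k ≠ l → ⁅t i j, t k l⁆ = 0)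
    (i j k p q : ℕ) (hbd : ∀ a ∈ [i, j, k, p, q], a < n)
    (hdist : List.Pairwise (· ≠ ·) [i, j, k, p, q]) :
    ⁅nuDK t i j k, nuDK t p q i + nuDK t p q j + nuDK t p q k⁆ = 0 := by
  simp only [List.mem_cons, List.not_mem_nil, or_false, forall_eq_or_imp, forall_eq] at hbd
  obtain ⟨hi, hj, hk, hp, hq⟩ := hbd
  simp only [List.pairwise_cons, List.mem_cons, List.not_mem_nil, or_false,
    forall_eq_or_imp, forall_eq, List.Pairwise.nil, and_true] at hdist
  obtain ⟨⟨hij, hik, hip, hiq⟩, ⟨hjk, hjp, hjq⟩, ⟨hkp, hkq⟩, hpq, -⟩ := hdist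
  -- The sum equals ⁅t p q, t q i + t q j + t q k⁆
  have hsum : nuDK t p q i + nuDK t p q j + nuDK t p q k
      = ⁅t p q, t q i + t q j + t q k⁆ := by
    simp [nuDK, lie_add]
  rw [hsum]
  set X := t q i + t q j + t q k with hX
  -- t i j commutes with X
  have h1 : ⁅t i j, X⁆ = 0 := by
    have e1 : ⁅t i j, t i q + t j q⁆ = 0 := hrel1 i j q hi hj hq hij hiq hjq
    have e2 : ⁅t i j, t q k⁆ = 0 := hrel2 i j q k hi hj hq hk hij hiq hik hjq hjk hkq.symm
    rw [lie_add] at e1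
    rw [hX, hsymm q i, hsymm q j, lie_add, lie_add, e2, add_zero, e1]
  -- t j k commutes with X
  have h2 : ⁅t j k, X⁆ = 0 := by
    have e1 : ⁅t j k, t j q + t k q⁆ = 0 := hrel1 j k q hj hk hq hjk hjq hkq
    have e2 : ⁅t j k, t q i⁆ = 0 := hrel2 j k q i hj hk hq hi hjk hjq hij.symm hkq hik.symm hiq.symm
    rw [lie_add] at e1
    rw [hX, hsymm q j, hsymm q k, lie_add, lie_add, e2, zero_add, e1]
  -- t i j, t j k commute with t p q
  have h3 : ⁅t i j, t p q⁆ = 0 := hrel2 i j p q hi hj hp hq hij hip hiq hjp hjq hpq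
  have h4 : ⁅t j k, t p q⁆ = 0 := hrel2 j k p q hj hk hp hq hjk hjp hjq hkp hkq hpq
  have hA1 : ⁅nuDK t i j k, t p q⁆ = 0 := lie_lie_zero h3 h4
  have hA2 : ⁅nuDK t i j k, X⁆ = 0 := lie_lie_zero h1 h2
  rw [leibniz_lie, hA1, hA2, zero_lie, lie_zero, add_zero]
end
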